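/- arXiv:1706.01031 — 2 statements merged into one kernel-verified Lean document; each statement's English description precedes it below -/
import Mathlib

section
/- Let D be a separable metric space, Q a fixed Borel probability measure on D, and S_n, S_n^(1), ..., S_n^(M) as in the bootstrap setup with the S_n^(i) conditionally independent given X_n. If d_BL(Pr^{S_n^(1)|X_n}, Q) → 0 in probability and S_n converges weakly to a random variable S with law Q', then the joint law of (S_n, S_n^(1), ..., S_n^(M)) converges weakly to Q' ⊗ Q^{⊗M}, i.e., E[f₀(S_n) f₁(S_n^(1)) ⋯ f_M(S_n^(M))] → E[f₀(S)] ∏_{j=1}^M ∫ f_j dQ for all bounded Lipschitz f₀, ..., f_M. -/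
/-! Conditioning on `X n` turns `E[f₀(S_n) ∏ᵢ fᵢ(S_n⁽ⁱ⁾)]` into `E[f₀(S_n) gₙ]` with
`gₙ = ∏ᵢ ∫ fᵢ dκₙ(Xₙ)`. Once the `fᵢ` are rescaled into `d_BL` test functions,
`|gₙ - ∏ᵢ ∫ fᵢ dQ| ≤ M · d_BL(κₙ(Xₙ), Q)`, so the bounded error `f₀(S_n) (gₙ - ∏ᵢ ∫ fᵢ dQ)` tends
to `0` in probability and hence, by dominated convergence along a.e. convergent subsequences, in
mean. What remains, `(∏ᵢ ∫ fᵢ dQ) · E f₀(S_n)`, converges by the weak convergence of `S_n`. -/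

open MeasureTheory ProbabilityTheory Filter Topology BoundedContinuousFunction

/-- The bounded Lipschitz distance between two measures. -/
noncomputable def dBL {D : Type*} [MeasurableSpace D] [PseudoMetricSpace D]
    (P Q : Measure D) : ℝ :=
  ⨆ h : {h : D → ℝ // (∀ x, |h x| ≤ 1) ∧ LipschitzWith 1 h},
    |∫ x, h.1 x ∂P - ∫ x, h.1 x ∂Q|

/-- `S 1, …, S M` are identically distributed and independent conditionally on
`X`, with common regular conditional distribution `κ (X ·)` given `X`. -/
def CondIID {Ω 𝒳 D : Type*} [MeasurableSpace Ω] [MeasurableSpace 𝒳]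
    [MeasurableSpace D] (Pr : Measure Ω) (X : Ω → 𝒳) {M : ℕ}
    (S : Fin M → Ω → D) (κ : Kernel 𝒳 D) : Prop :=
  ∀ (φ : 𝒳 → ℝ) (ψ : Fin M → D → ℝ), Measurable φ → (∀ x, |φ x| ≤ 1) →
    (∀ i, Measurable (ψ i)) → (∀ i x, |ψ i x| ≤ 1) →
    ∫ ω, φ (X ω) * ∏ i, ψ i (S i ω) ∂Pr
      = ∫ ω, φ (X ω) * ∏ i, ∫ x, ψ i x ∂(κ (X ω)) ∂Pr

lemma abs_integral_le_of_abs_le {D : Type*} [MeasurableSpace D] (P : Measure D)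
    [IsProbabilityMeasure P] {h : D → ℝ} {C : ℝ} (hb : ∀ x, |h x| ≤ C) :
    |∫ x, h x ∂P| ≤ C := by
  simpa using norm_integral_le_of_norm_le_const (μ := P) (f := h) (.of_forall hb)

lemma dBL_nonneg {D : Type*} [MeasurableSpace D] [PseudoMetricSpace D] (P Q : Measure D) :
    0 ≤ dBL P Q :=
  Real.iSup_nonneg fun _ => abs_nonneg _

lemma abs_integral_sub_le_dBL {D : Type*} [MeasurableSpace D] [PseudoMetricSpace D]
    (P Q : Measure D) [IsProbabilityMeasure P] [IsProbabilityMeasure Q]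
    {h : D → ℝ} (hb : ∀ x, |h x| ≤ 1) (hl : LipschitzWith 1 h) :
    |∫ x, h x ∂P - ∫ x, h x ∂Q| ≤ dBL P Q := by
  refine le_ciSup (f := fun h : {h : D → ℝ // (∀ x, |h x| ≤ 1) ∧ LipschitzWith 1 h} =>
    |∫ x, h.1 x ∂P - ∫ x, h.1 x ∂Q|) ⟨2, ?_⟩ ⟨h, hb, hl⟩
  rintro r ⟨g, rfl⟩
  calc |∫ x, g.1 x ∂P - ∫ x, g.1 x ∂Q| ≤ |∫ x, g.1 x ∂P| + |∫ x, g.1 x ∂Q| := abs_sub _ _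
    _ ≤ 1 + 1 := add_le_add (abs_integral_le_of_abs_le P g.2.1) (abs_integral_le_of_abs_le Q g.2.1)
    _ = 2 := one_add_one_eq_two

lemma abs_prod_sub_prod_le_sum_abs_sub {ι : Type*} (s : Finset ι) {a b : ι → ℝ}
    (ha : ∀ i ∈ s, |a i| ≤ 1) (hb : ∀ i ∈ s, |b i| ≤ 1) :
    |∏ i ∈ s, a i - ∏ i ∈ s, b i| ≤ ∑ i ∈ s, |a i - b i| := by
  classical
  induction s using Finset.induction_on with
  | empty => simp
  | insert j s hj ih =>
    simp only [Finset.mem_insert, forall_eq_or_imp] at ha hb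
    have hprod : |∏ i ∈ s, a i| ≤ 1 := by
      rw [Finset.abs_prod]
      exact Finset.prod_le_one (fun i _ => abs_nonneg _) ha.2
    rw [Finset.prod_insert hj, Finset.prod_insert hj, Finset.sum_insert hj]
    calc |a j * ∏ i ∈ s, a i - b j * ∏ i ∈ s, b i|
        = |(a j - b j) * ∏ i ∈ s, a i + b j * (∏ i ∈ s, a i - ∏ i ∈ s, b i)| := by ring_nf
      _ ≤ |a j - b j| * |∏ i ∈ s, a i| + |b j| * |∏ i ∈ s, a i - ∏ i ∈ s, b i| := by
        rw [← abs_mul, ← abs_mul]; exact abs_add_le _ _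
      _ ≤ |a j - b j| * 1 + 1 * ∑ i ∈ s, |a i - b i| := by
        gcongr
        · exact hb.1
        · exact ih ha.2 hb.2
      _ = |a j - b j| + ∑ i ∈ s, |a i - b i| := by ring

lemma abs_prod_integral_sub_le_card_mul_dBL {ι D : Type*} [Fintype ι] [MeasurableSpace D]
    [PseudoMetricSpace D] (P Q : Measure D) [IsProbabilityMeasure P] [IsProbabilityMeasure Q]
    {f : ι → D → ℝ} (hb : ∀ i x, |f i x| ≤ 1) (hl : ∀ i, LipschitzWith 1 (f i)) :
    |∏ i, ∫ x, f i x ∂P - ∏ i, ∫ x, f i x ∂Q| ≤ Fintype.card ι * dBL P Q :=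
  calc |∏ i, ∫ x, f i x ∂P - ∏ i, ∫ x, f i x ∂Q|
      ≤ ∑ i, |∫ x, f i x ∂P - ∫ x, f i x ∂Q| :=
        abs_prod_sub_prod_le_sum_abs_sub _ (fun i _ => abs_integral_le_of_abs_le P (hb i))
          (fun i _ => abs_integral_le_of_abs_le Q (hb i))
    _ ≤ ∑ _i : ι, dBL P Q :=
        Finset.sum_le_sum fun i _ => abs_integral_sub_le_dBL P Q (hb i) (hl i)
    _ = Fintype.card ι * dBL P Q := by simp

lemma tendstoInMeasure_zero_of_norm_le_mul {α ι E F : Type*} [MeasurableSpace α]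
    {μ : Measure α} {l : Filter ι} [SeminormedAddCommGroup E] [SeminormedAddCommGroup F]
    {f : ι → α → E} {g : ι → α → F} {c : ℝ} (h : ∀ i x, ‖f i x‖ ≤ c * ‖g i x‖)
    (hg : TendstoInMeasure μ g l 0) : TendstoInMeasure μ f l 0 := by
  rw [tendstoInMeasure_iff_norm] at hg ⊢
  intro ε hε
  have hc : 0 < max c 1 := lt_max_of_lt_right one_pos
  refine tendsto_of_tendsto_of_tendsto_of_le_of_le tendsto_const_nhds (hg (ε / max c 1)
    (div_pos hε hc)) (fun _ => zero_le) fun i => measure_mono fun x hx => ?_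
  simp only [Set.mem_ofPred_eq, Pi.zero_apply, sub_zero] at hx ⊢
  rw [div_le_iff₀ hc]
  calc ε ≤ ‖f i x‖ := hx
    _ ≤ c * ‖g i x‖ := h i x
    _ ≤ ‖g i x‖ * max c 1 := by rw [mul_comm]; gcongr; exact le_max_left c 1

theorem tendsto_integral_of_tendstoInMeasure_of_norm_le {α E : Type*} [MeasurableSpace α]
    {μ : Measure α} [IsFiniteMeasure μ] [NormedAddCommGroup E] [NormedSpace ℝ E]
    {f : ℕ → α → E} {g : α → E} {B : ℝ} (hfg : TendstoInMeasure μ f atTop g)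
    (hf : ∀ n, AEStronglyMeasurable (f n) μ) (hB : ∀ n, ∀ᵐ x ∂μ, ‖f n x‖ ≤ B) :
    Tendsto (fun n => ∫ x, f n x ∂μ) atTop (𝓝 (∫ x, g x ∂μ)) := by
  refine tendsto_of_subseq_tendsto fun ns hns => ?_
  obtain ⟨ms, -, hms⟩ := (hfg.comp hns).exists_seq_tendsto_ae
  exact ⟨ms, tendsto_integral_of_dominated_convergence (fun _ => B) (fun n => hf _)
    (integrable_const B) (fun n => hB _) hms⟩

lemma div_mul_prod_div {ι K : Type*} [Fintype ι] [Field K] (a c : K) (b : ι → K) :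
    a / c * ∏ i, b i / c = (a * ∏ i, b i) / c ^ (Fintype.card ι + 1) := by
  rw [Finset.prod_div_distrib, Finset.prod_const, Finset.card_univ, div_mul_div_comm,
    ← pow_succ']

lemma LipschitzWith.div_const_of_le {D : Type*} [PseudoMetricSpace D] {f : D → ℝ}
    {L : NNReal} {c : ℝ} (hf : LipschitzWith L f) (hc : 0 < c) (hLc : (L : ℝ) ≤ c) :
    LipschitzWith 1 fun x => f x / c :=
  .of_dist_le_mul fun x y => by
    rw [Real.dist_eq, ← sub_div, abs_div, abs_of_pos hc, div_le_iff₀ hc, NNReal.coe_one,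
      one_mul, ← Real.dist_eq, mul_comm]
    exact (hf.dist_le_mul x y).trans (by gcongr)

section Bootstrap

variable {Ω 𝒳 D : Type*} [MeasurableSpace Ω] [MeasurableSpace 𝒳] [PseudoMetricSpace D]
  [MeasurableSpace D] [OpensMeasurableSpace D] {Pr : Measure Ω} [IsProbabilityMeasure Pr]
  {X : ℕ → Ω → 𝒳} {M : ℕ} {S : ℕ → Fin M → Ω → D} {T : ℕ → 𝒳 → D} {κ : ℕ → Kernel 𝒳 D}
  [∀ n, IsMarkovKernel (κ n)] {Q Q' : Measure D} [IsProbabilityMeasure Q]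
  {f₀ : D → ℝ} {f : Fin M → D → ℝ}

theorem tendsto_integral_mul_prod_of_abs_le_one (hX : ∀ n, Measurable (X n))
    (hT : ∀ n, Measurable (T n)) (hcond : ∀ n, CondIID Pr (X n) (S n) (κ n))
    (hBL : TendstoInMeasure Pr (fun n ω => dBL (κ n (X n ω)) Q) atTop (fun _ => 0))
    (hf₀m : Measurable f₀) (hf₀b : ∀ x, |f₀ x| ≤ 1)
    (hSweak : Tendsto (fun n => ∫ ω, f₀ (T n (X n ω)) ∂Pr) atTop (𝓝 (∫ x, f₀ x ∂Q')))
    (hfb : ∀ i x, |f i x| ≤ 1) (hfl : ∀ i, LipschitzWith 1 (f i)) :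
    Tendsto (fun n => ∫ ω, f₀ (T n (X n ω)) * ∏ i, f i (S n i ω) ∂Pr) atTop
      (𝓝 ((∫ x, f₀ x ∂Q') * ∏ i, ∫ x, f i x ∂Q)) := by
  set g : ℕ → Ω → ℝ := fun n ω => ∏ i, ∫ x, f i x ∂(κ n (X n ω))
  set gQ : ℝ := ∏ i, ∫ x, f i x ∂Q
  set F : ℕ → Ω → ℝ := fun n ω => f₀ (T n (X n ω)) * (g n ω - gQ)
  have hfm : ∀ i, Measurable (f i) := fun i => (hfl i).continuous.measurable
  have hφm : ∀ n, Measurable fun ω => f₀ (T n (X n ω)) := fun n => hf₀m.comp ((hT n).comp (hX n))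
  have hgm : ∀ n, Measurable (g n) := fun n => Finset.measurable_prod _ fun i _ =>
    ((hfm i).stronglyMeasurable.integral_kernel (κ := κ n)).measurable.comp (hX n)
  have hprod_le : ∀ (P : Measure D) [IsProbabilityMeasure P], |∏ i, ∫ x, f i x ∂P| ≤ 1 :=
    fun P _ => by
      rw [Finset.abs_prod]
      exact Finset.prod_le_one (fun _ _ => abs_nonneg _) fun i _ =>
        abs_integral_le_of_abs_le P (hfb i)
  have hg_sub : ∀ n ω, |g n ω - gQ| ≤ M * dBL (κ n (X n ω)) Q := fun n ω => by
    simpa using abs_prod_integral_sub_le_card_mul_dBL (κ n (X n ω)) Q hfb hfl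
  have hF_le : ∀ n ω, |F n ω| ≤ |g n ω - gQ| := fun n ω => by
    rw [abs_mul]; exact mul_le_of_le_one_left (abs_nonneg _) (hf₀b _)
  have hF_meas : TendstoInMeasure Pr F atTop 0 :=
    tendstoInMeasure_zero_of_norm_le_mul (fun n ω => by
      rw [Real.norm_eq_abs, Real.norm_eq_abs, abs_of_nonneg (dBL_nonneg _ _)]
      exact (hF_le n ω).trans (hg_sub n ω)) hBL
  have hF_aesm : ∀ n, AEStronglyMeasurable (F n) Pr :=
    fun n => ((hφm n).mul ((hgm n).sub measurable_const)).aestronglyMeasurable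
  have hF_bound : ∀ n ω, ‖F n ω‖ ≤ 2 := fun n ω =>
    (hF_le n ω).trans <| (abs_sub _ _).trans <|
      (add_le_add (hprod_le _) (hprod_le Q)).trans_eq one_add_one_eq_two
  have hF_int : Tendsto (fun n => ∫ ω, F n ω ∂Pr) atTop (𝓝 0) := by
    simpa using tendsto_integral_of_tendstoInMeasure_of_norm_le hF_meas hF_aesm
      fun n => .of_forall (hF_bound n)
  have hsplit : ∀ n, ∫ ω, f₀ (T n (X n ω)) * ∏ i, f i (S n i ω) ∂Pr
      = ∫ ω, F n ω ∂Pr + gQ * ∫ ω, f₀ (T n (X n ω)) ∂Pr := fun n => by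
    rw [hcond n (fun x => f₀ (T n x)) f (hf₀m.comp (hT n)) (fun x => hf₀b _) hfm hfb,
      ← integral_const_mul, ← integral_add]
    · congr 1 with ω; ring
    · exact .of_bound (hF_aesm n) 2 (.of_forall (hF_bound n))
    · exact (Integrable.of_bound (hφm n).aestronglyMeasurable 1
        (.of_forall fun ω => hf₀b _)).const_mul gQ
  rw [mul_comm]
  simpa only [← hsplit, zero_add] using hF_int.add (hSweak.const_mul gQ)

end Bootstrap

theorem stmt11_general {Ω 𝒳 D : Type*} [MeasurableSpace Ω] [MeasurableSpace 𝒳]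
    [MetricSpace D] [MeasurableSpace D] [BorelSpace D]
    (Pr : Measure Ω) [IsProbabilityMeasure Pr]
    (X : ℕ → Ω → 𝒳) (hX : ∀ n, Measurable (X n))
    (M : ℕ) (S : ℕ → Fin M → Ω → D)
    (T : ℕ → 𝒳 → D) (hT : ∀ n, Measurable (T n))
    (κ : ℕ → Kernel 𝒳 D) (hκ : ∀ n, IsMarkovKernel (κ n))
    (hcond : ∀ n, CondIID Pr (X n) (S n) (κ n))
    (Q Q' : Measure D) [IsProbabilityMeasure Q] [IsProbabilityMeasure Q']
    (hBL : TendstoInMeasure Pr (fun n ω => dBL (κ n (X n ω)) Q) atTop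
      (fun _ => 0))
    (hSweak : ∀ f : D →ᵇ ℝ,
      Tendsto (fun n => ∫ ω, f (T n (X n ω)) ∂Pr) atTop (𝓝 (∫ x, f x ∂Q'))) :
    ∀ (f₀ : D → ℝ) (f : Fin M → D → ℝ) (C : ℝ) (L : NNReal),
      (∀ x, |f₀ x| ≤ C) → LipschitzWith L f₀ →
      (∀ i x, |f i x| ≤ C) → (∀ i, LipschitzWith L (f i)) →
      Tendsto (fun n => ∫ ω, f₀ (T n (X n ω)) * ∏ i, f i (S n i ω) ∂Pr) atTop
        (𝓝 ((∫ x, f₀ x ∂Q') * ∏ i, ∫ x, f i x ∂Q)) := by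
  intro f₀ f C L hf₀b hf₀l hfb hfl
  -- Both sides are homogeneous of degree `M + 1` in `(f₀, f)`: rescale to `d_BL` test functions.
  set c : ℝ := max (max C L) 1
  have hc : 0 < c := lt_max_of_lt_right one_pos
  have hCc : C ≤ c := (le_max_left _ _).trans (le_max_left _ _)
  have hLc : (L : ℝ) ≤ c := (le_max_right _ _).trans (le_max_left _ _)
  have habs_div : ∀ {g : D → ℝ}, (∀ x, |g x| ≤ C) → ∀ x, |g x / c| ≤ 1 := fun hg x => by
    rw [abs_div, abs_of_pos hc, div_le_one hc]; exact (hg x).trans hCc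
  have key := tendsto_integral_mul_prod_of_abs_le_one (Q' := Q') hX hT hcond hBL
    (hf₀l.continuous.measurable.div_const c) (habs_div hf₀b)
    (by simpa only [integral_div, coe_ofNormedAddCommGroup] using
      (hSweak (.ofNormedAddCommGroup f₀ hf₀l.continuous C hf₀b)).div_const c)
    (fun i => habs_div (hfb i)) fun i => (hfl i).div_const_of_le hc hLc
  simp only [div_mul_prod_div, integral_div, Fintype.card_fin] at key
  simpa [hc.ne'] using key.mul_const (c ^ (M + 1))

/-- If `d_BL(Pr^{S_n^{(1)} | X_n}, Q) → 0` in probability, the statistic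
`S_n = T n (X n ·)` is a measurable function of the data and converges weakly
to a limit with law `Q'`, and the bootstrap replicates are identically
distributed and conditionally independent given `X_n`, then the joint law of
`(S_n, S_n^{(1)}, …, S_n^{(M)})` converges weakly to `Q' ⊗ Q^{⊗M}`, in the
sense that `E[f₀(S_n) f₁(S_n^{(1)}) ⋯ f_M(S_n^{(M)})] → (∫ f₀ dQ') ∏_j ∫ f_j dQ`
for all bounded Lipschitz `f₀, f₁, …, f_M`. -/
theorem stmt11 {Ω 𝒳 D : Type*} [MeasurableSpace Ω] [MeasurableSpace 𝒳]
    [MetricSpace D] [MeasurableSpace D] [BorelSpace D]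
    [TopologicalSpace.SeparableSpace D]
    (Pr : Measure Ω) [IsProbabilityMeasure Pr]
    (X : ℕ → Ω → 𝒳) (hX : ∀ n, Measurable (X n))
    (M : ℕ) (S : ℕ → Fin M → Ω → D) (hS : ∀ n i, Measurable (S n i))
    (T : ℕ → 𝒳 → D) (hT : ∀ n, Measurable (T n))
    (κ : ℕ → Kernel 𝒳 D) (hκ : ∀ n, IsMarkovKernel (κ n))
    (hcond : ∀ n, CondIID Pr (X n) (S n) (κ n))
    (Q Q' : Measure D) [IsProbabilityMeasure Q] [IsProbabilityMeasure Q']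
    (hBL : TendstoInMeasure Pr (fun n ω => dBL (κ n (X n ω)) Q) atTop
      (fun _ => 0))
    (hSweak : ∀ f : D →ᵇ ℝ,
      Tendsto (fun n => ∫ ω, f (T n (X n ω)) ∂Pr) atTop (𝓝 (∫ x, f x ∂Q'))) :
    ∀ (f₀ : D → ℝ) (f : Fin M → D → ℝ) (C : ℝ) (L : NNReal),
      (∀ x, |f₀ x| ≤ C) → LipschitzWith L f₀ →
      (∀ i x, |f i x| ≤ C) → (∀ i, LipschitzWith L (f i)) →
      Tendsto (fun n => ∫ ω, f₀ (T n (X n ω)) * ∏ i, f i (S n i ω) ∂Pr) atTop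
        (𝓝 ((∫ x, f₀ x ∂Q') * ∏ i, ∫ x, f i x ∂Q)) :=
  stmt11_general Pr X hX M S T hT κ hκ hcond Q Q' hBL hSweak
end

section
/- Let S_n be real random variables converging weakly to S with continuous distribution function F, and let F_n^M(x) = (1/M) Σ_{i=1}^M 1{S_n^(i) ≤ x} be the empirical distribution function of M bootstrap replicates. If sup_x |F_n^M(x) − F(x)| → 0 in probability as n, M → ∞, then for every α ∈ (0,1), Pr( S_n ≥ (F_n^M)⁻¹(1−α) ) → α as n, M → ∞. -/
/-!
On the event that `F_n^M` is uniformly within `ε` of `F`, the generalized `(1 - α)`-quantile of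
`F_n^M` lies between the points `a`, `b` with `F a = 1 - α - ε` and `F b = 1 - α + ε`, which
exist because `F` is continuous. So `Pr(S_n ≥ (F_n^M)⁻¹(1 - α))` is squeezed between
`Pr(S_n ≥ b)` and `Pr(S_n ≥ a)`, up to the vanishing probability of the bad event. Since `F`
has no atoms, the portmanteau theorem sends these to `α - ε` and `α + ε`.
-/

open MeasureTheory Filter Topology BoundedContinuousFunction ProbabilityTheory Set

noncomputable def empiricalCDF (X : ℕ → ℝ) (M : ℕ) (x : ℝ) : ℝ :=
  (M : ℝ)⁻¹ * ∑ i ∈ Finset.range M, if X i ≤ x then 1 else 0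

lemma empiricalCDF_nonneg (X : ℕ → ℝ) (M : ℕ) (x : ℝ) : 0 ≤ empiricalCDF X M x := by
  unfold empiricalCDF
  positivity

lemma empiricalCDF_le_one (X : ℕ → ℝ) (M : ℕ) (x : ℝ) : empiricalCDF X M x ≤ 1 := by
  rw [empiricalCDF, Finset.sum_boole]
  exact inv_mul_le_one_of_le₀
    (by exact_mod_cast (Finset.card_filter_le _ _).trans_eq (Finset.card_range M))
    (Nat.cast_nonneg _)

section CDF

variable {μ : Measure ℝ}

lemma measure_singleton_eq_zero_of_continuousWithinAt_cdf [IsProbabilityMeasure μ] {c : ℝ}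
    (h : ContinuousWithinAt (cdf μ) (Iic c) c) : μ {c} = 0 := by
  rw [← measure_cdf μ, StieltjesFunction.measure_singleton, h.leftLim_eq, sub_self,
    ENNReal.ofReal_zero]

lemma measureReal_Ici_eq_one_sub_cdf [IsProbabilityMeasure μ] {c : ℝ}
    (h : ContinuousWithinAt (cdf μ) (Iic c) c) : μ.real (Ici c) = 1 - cdf μ c := by
  have hIci := (cdf μ).measure_Ici (tendsto_cdf_atTop μ) c
  rw [measure_cdf, h.leftLim_eq] at hIci
  rw [measureReal_def, hIci, ENNReal.toReal_ofReal (sub_nonneg.2 (cdf_le_one μ c))]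

lemma Ioo_subset_range_cdf (h : Continuous (cdf μ)) : Ioo 0 1 ⊆ range (cdf μ) := fun _ ht =>
  mem_range_of_exists_le_of_exists_ge h
    ((tendsto_cdf_atBot μ).eventually (eventually_le_nhds ht.1)).exists
    ((tendsto_cdf_atTop μ).eventually (eventually_ge_nhds ht.2)).exists

end CDF

lemma tendsto_measureReal_preimage_of_forall_integral_tendsto
    {X : Type*} [TopologicalSpace X] [MeasurableSpace X] [OpensMeasurableSpace X]
    [HasOuterApproxClosed X] {Ω ι : Type*} [MeasurableSpace Ω] {l : Filter ι}
    {P : Measure Ω} [IsProbabilityMeasure P] {Y : ι → Ω → X} (hY : ∀ i, AEMeasurable (Y i) P)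
    {μ : Measure X} [IsProbabilityMeasure μ]
    (h : ∀ g : X →ᵇ ℝ, Tendsto (fun i => ∫ ω, g (Y i ω) ∂P) l (𝓝 (∫ x, g x ∂μ)))
    {E : Set X} (hE : MeasurableSet E) (hE0 : μ (frontier E) = 0) :
    Tendsto (fun i => P.real (Y i ⁻¹' E)) l (𝓝 (μ.real E)) := by
  let ν : ι → ProbabilityMeasure X := fun i =>
    ⟨P.map (Y i), Measure.isProbabilityMeasure_map (hY i)⟩
  have hν : Tendsto ν l (𝓝 ⟨μ, inferInstance⟩) := by
    refine ProbabilityMeasure.tendsto_iff_forall_integral_tendsto.2 fun g => ?_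
    simpa only [ν, ProbabilityMeasure.coe_mk,
      integral_map (hY _) g.continuous.measurable.aestronglyMeasurable] using h g
  have hνE := ProbabilityMeasure.tendsto_measure_of_null_frontier_of_tendsto' hν hE0
  refine ((ENNReal.tendsto_toReal (measure_ne_top μ E)).comp hνE).congr fun i => ?_
  simp [ν, measureReal_def, Measure.map_apply_of_aemeasurable (hY i) hE]

lemma MeasureTheory.TendstoInMeasure.tendsto_measure_exists_le_of_bddAbove {Ω ι X : Type*}
    [MeasurableSpace Ω] {P : Measure Ω} {l : Filter ι} {f : ι → Ω → X → ℝ}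
    (hbdd : ∀ i ω, BddAbove (range (f i ω)))
    (h : TendstoInMeasure P (fun i ω => ⨆ x, f i ω x) l fun _ => 0) {ε : ℝ} (hε : 0 < ε) :
    Tendsto (fun i => P {ω | ∃ x, ε ≤ f i ω x}) l (𝓝 0) := by
  refine tendsto_of_tendsto_of_tendsto_of_le_of_le tendsto_const_nhds
    (tendstoInMeasure_iff_dist.1 h ε hε) (fun _ => zero_le) fun i => measure_mono ?_
  rintro ω ⟨x, hx⟩
  show ε ≤ dist _ _
  rw [Real.dist_eq, sub_zero]
  exact hx.trans ((le_ciSup (hbdd i ω) x).trans (le_abs_self _))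

lemma sInf_setOf_le_mem_Icc_of_abs_sub_lt {F G : ℝ → ℝ} (hF : Monotone F) {q ε a b : ℝ}
    (hG : ∀ x, |G x - F x| < ε) (ha : F a ≤ q - ε) (hb : q + ε ≤ F b) :
    sInf {x | q ≤ G x} ∈ Icc a b := by
  have hb_mem : b ∈ {x | q ≤ G x} := by
    have := (abs_lt.1 (hG b)).1
    show q ≤ G b
    linarith
  have ha_lower : a ∈ lowerBounds {x | q ≤ G x} := fun x (hx : q ≤ G x) => by
    by_contra! hxa
    have := (abs_lt.1 (hG x)).2
    linarith [hF hxa.le]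
  exact ⟨le_csInf ⟨b, hb_mem⟩ ha_lower, csInf_le ⟨a, ha_lower⟩ hb_mem⟩

lemma measureReal_quantile_le_sandwich {Ω : Type*} [MeasurableSpace Ω] (P : Measure Ω)
    [IsFiniteMeasure P] {F : ℝ → ℝ} (hF : Monotone F) (G : Ω → ℝ → ℝ) (Y : Ω → ℝ)
    {q ε a b : ℝ} (ha : F a ≤ q - ε) (hb : q + ε ≤ F b) :
    P.real {ω | b ≤ Y ω} - P.real {ω | ∃ x, ε ≤ |G ω x - F x|} ≤
        P.real {ω | sInf {x | q ≤ G ω x} ≤ Y ω} ∧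
      P.real {ω | sInf {x | q ≤ G ω x} ≤ Y ω} ≤
        P.real {ω | a ≤ Y ω} + P.real {ω | ∃ x, ε ≤ |G ω x - F x|} := by
  set bad := {ω | ∃ x, ε ≤ |G ω x - F x|}
  have hquantile (ω : Ω) (hω : ω ∉ bad) : sInf {x | q ≤ G ω x} ∈ Icc a b :=
    sInf_setOf_le_mem_Icc_of_abs_sub_lt hF (by simpa [bad] using hω) ha hb
  constructor
  · rw [sub_le_iff_le_add]
    refine (measureReal_mono fun ω (hω : b ≤ Y ω) => ?_).trans (measureReal_union_le _ _)
    by_cases hbad : ω ∈ bad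
    · exact Or.inr hbad
    · exact Or.inl ((hquantile ω hbad).2.trans hω)
  · refine (measureReal_mono fun ω (hω : _ ≤ Y ω) => ?_).trans (measureReal_union_le _ _)
    by_cases hbad : ω ∈ bad
    · exact Or.inr hbad
    · exact Or.inl ((hquantile ω hbad).1.trans hω)

lemma tendsto_of_forall_squeeze {ι : Type*} {l : Filter ι} {u : ι → ℝ} {c ε₀ : ℝ}
    (hε₀ : 0 < ε₀)
    (h : ∀ ε, 0 < ε → ε < ε₀ → ∃ lo hi : ι → ℝ, Tendsto lo l (𝓝 (c - ε)) ∧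
      Tendsto hi l (𝓝 (c + ε)) ∧ ∀ᶠ i in l, lo i ≤ u i ∧ u i ≤ hi i) :
    Tendsto u l (𝓝 c) := by
  refine tendsto_order.2 ⟨fun c' hc' => ?_, fun c' hc' => ?_⟩
  · set ε := min ((c - c') / 2) (ε₀ / 2)
    obtain ⟨lo, _, hlo, _, hbounds⟩ := h ε (by positivity) (by grind)
    filter_upwards [hlo.eventually (eventually_gt_nhds (show c' < c - ε by grind)), hbounds]
      with i hi hb
    exact hi.trans_le hb.1
  · set ε := min ((c' - c) / 2) (ε₀ / 2)
    obtain ⟨_, hi, _, hhi, hbounds⟩ := h ε (by positivity) (by grind)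
    filter_upwards [hhi.eventually (eventually_lt_nhds (show c + ε < c' by grind)), hbounds]
      with i hi hb
    exact hb.2.trans_lt hi

theorem stmt14_general {Ω : Type*} [MeasurableSpace Ω]
    (Pr : Measure Ω) [IsProbabilityMeasure Pr]
    (Sn : ℕ → Ω → ℝ) (hSn : ∀ n, Measurable (Sn n))
    (S : ℕ → ℕ → Ω → ℝ)
    (μ : Measure ℝ) [IsProbabilityMeasure μ] (F : ℝ → ℝ)
    (hF : ∀ x, F x = (μ (Set.Iic x)).toReal) (hFcont : Continuous F)
    (hweak : ∀ g : ℝ →ᵇ ℝ,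
      Tendsto (fun n => ∫ ω, g (Sn n ω) ∂Pr) atTop (𝓝 (∫ x, g x ∂μ)))
    (hsup : TendstoInMeasure Pr
      (fun p : ℕ × ℕ => fun ω => ⨆ x : ℝ,
        |(p.2 : ℝ)⁻¹ * ∑ i ∈ Finset.range p.2,
            (if S p.1 i ω ≤ x then (1 : ℝ) else 0) - F x|)
      atTop (fun _ => 0))
    (α : ℝ) (hα : α ∈ Set.Ioo (0 : ℝ) 1) :
    Tendsto (fun p : ℕ × ℕ =>
        (Pr {ω | sInf {x : ℝ | 1 - α ≤ (p.2 : ℝ)⁻¹ * ∑ i ∈ Finset.range p.2,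
            (if S p.1 i ω ≤ x then (1 : ℝ) else 0)} ≤ Sn p.1 ω}).toReal)
      atTop (𝓝 α) := by
  obtain rfl : F = cdf μ := funext fun x => (hF x).trans (cdf_eq_real μ x).symm
  have hport (c : ℝ) :
      Tendsto (fun p : ℕ × ℕ => Pr.real {ω | c ≤ Sn p.1 ω}) atTop (𝓝 (1 - cdf μ c)) := by
    have hc := hFcont.continuousWithinAt (s := Iic c) (x := c)
    rw [← measureReal_Ici_eq_one_sub_cdf hc]
    refine (tendsto_measureReal_preimage_of_forall_integral_tendsto
      (fun n => (hSn n).aemeasurable) hweak measurableSet_Ici ?_).comp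
      (tendsto_fst.mono_left prod_atTop_atTop_eq.ge)
    rw [frontier_Ici]
    exact measure_singleton_eq_zero_of_continuousWithinAt_cdf hc
  have hbad {ε : ℝ} (hε : 0 < ε) : Tendsto (fun p : ℕ × ℕ =>
      Pr.real {ω | ∃ x, ε ≤ |empiricalCDF (S p.1 · ω) p.2 x - cdf μ x|}) atTop (𝓝 0) := by
    refine (ENNReal.tendsto_toReal_zero_iff fun _ => measure_ne_top _ _).2 ?_
    refine hsup.tendsto_measure_exists_le_of_bddAbove (fun p ω => ⟨1, ?_⟩) hε
    rintro _ ⟨x, rfl⟩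
    exact abs_sub_le_of_nonneg_of_le (empiricalCDF_nonneg _ _ _) (empiricalCDF_le_one _ _ _)
      (cdf_nonneg μ x) (cdf_le_one μ x)
  refine tendsto_of_forall_squeeze (lt_min hα.1 (sub_pos.2 hα.2)) fun ε hε hεα => ?_
  obtain ⟨hεα₀, hεα₁⟩ := lt_min_iff.1 hεα
  obtain ⟨a, ha⟩ := Ioo_subset_range_cdf hFcont
    (show 1 - α - ε ∈ Ioo 0 1 from ⟨by linarith, by linarith⟩)
  obtain ⟨b, hb⟩ := Ioo_subset_range_cdf hFcont
    (show 1 - α + ε ∈ Ioo 0 1 from ⟨by linarith, by linarith⟩)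
  refine ⟨_, _, ?_, ?_, Eventually.of_forall fun p => measureReal_quantile_le_sandwich Pr
    (monotone_cdf μ) (fun ω => empiricalCDF (S p.1 · ω) p.2) (Sn p.1) ha.le hb.ge⟩
  · convert (hport b).sub (hbad hε) using 2
    rw [hb]; ring
  · convert (hport a).add (hbad hε) using 2
    rw [ha]; ring

/-- If `S_n ⇝ S` where the distribution function `F` of `S` is continuous, and
the empirical distribution function `F_n^M(x) = (1/M) Σ_{i<M} 1{S_n^{(i)} ≤ x}`
of the bootstrap replicates satisfies `sup_x |F_n^M(x) − F(x)| → 0` in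
probability as `n, M → ∞` jointly, then for every `α ∈ (0,1)`,
`Pr(S_n ≥ (F_n^M)⁻¹(1−α)) → α` as `n, M → ∞`, where `(F_n^M)⁻¹` is the
generalized inverse. -/
theorem stmt14 {Ω : Type*} [MeasurableSpace Ω]
    (Pr : Measure Ω) [IsProbabilityMeasure Pr]
    (Sn : ℕ → Ω → ℝ) (hSn : ∀ n, Measurable (Sn n))
    (S : ℕ → ℕ → Ω → ℝ) (hS : ∀ n i, Measurable (S n i))
    (μ : Measure ℝ) [IsProbabilityMeasure μ] (F : ℝ → ℝ)
    (hF : ∀ x, F x = (μ (Set.Iic x)).toReal) (hFcont : Continuous F)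
    (hweak : ∀ g : ℝ →ᵇ ℝ,
      Tendsto (fun n => ∫ ω, g (Sn n ω) ∂Pr) atTop (𝓝 (∫ x, g x ∂μ)))
    (hsup : TendstoInMeasure Pr
      (fun p : ℕ × ℕ => fun ω => ⨆ x : ℝ,
        |(p.2 : ℝ)⁻¹ * ∑ i ∈ Finset.range p.2,
            (if S p.1 i ω ≤ x then (1 : ℝ) else 0) - F x|)
      atTop (fun _ => 0))
    (α : ℝ) (hα : α ∈ Set.Ioo (0 : ℝ) 1) :
    Tendsto (fun p : ℕ × ℕ =>
        (Pr {ω | sInf {x : ℝ | 1 - α ≤ (p.2 : ℝ)⁻¹ * ∑ i ∈ Finset.range p.2,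
            (if S p.1 i ω ≤ x then (1 : ℝ) else 0)} ≤ Sn p.1 ω}).toReal)
      atTop (𝓝 α) :=
  stmt14_general Pr Sn hSn S μ F hF hFcont hweak hsup α hα
end
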